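/- Let (u,τ,S) be a twice continuously differentiable solution of the full compressible Euler equations τ_t − u_x = 0, u_t + p_x = 0, S_t = 0 (p = K e^{S/c_v} τ^{−γ}) with τ > 0 on an open subset of ℝ×ℝ, and let 0 < ε < 1/4. Then the weighted gradient variables α_ε = η^{2ε/(γ−1)}·α and β_ε = η^{2ε/(γ−1)}·β satisfy, at every point: (α_ε)_t + c·(α_ε)_x = k_{1ε}·( k_{2ε}·(3α_ε − 4εα_ε + β_ε) + (1 − 4ε/(γ+1))·α_ε β_ε − α_ε² ) and (β_ε)_t − c·(β_ε)_x = k_{1ε}·( −k_{2ε}·(α_ε + 3β_ε − 4εβ_ε) + (1 − 4ε/(γ+1))·α_ε β_ε − β_ε² ), where k_{1ε} = ((γ+1)K_c/(2(γ−1)))·η^{(2/(γ−1))(1−ε)} and k_{2ε} = ((γ−1)/(γ(γ+1)))·η^{1+2ε/(γ−1)}·m_x. -/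

import Mathlib

open Real Set MeasureTheory

noncomputable section

/-- Partial derivative in the spatial variable `x`. -/
def pdx (f : ℝ → ℝ → ℝ) (x t : ℝ) : ℝ := deriv (fun y => f y t) x

/-- Partial derivative in the time variable `t`. -/
def pdt (f : ℝ → ℝ → ℝ) (x t : ℝ) : ℝ := deriv (fun s => f x s) t

/-- The time strip `ℝ × [0, T)`, where `T` is a real number or `+∞`. -/
def strip (T : EReal) : Set (ℝ × ℝ) := {p : ℝ × ℝ | 0 ≤ p.2 ∧ (p.2 : EReal) < T}

/-- `η = (2√(Kγ)/(γ−1)) τ^{−(γ−1)/2}`. -/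
def etaP (K γ : ℝ) (τ : ℝ → ℝ → ℝ) (x t : ℝ) : ℝ :=
  2 * Real.sqrt (K * γ) / (γ - 1) * τ x t ^ (-(γ - 1) / 2)

/-- Gradient variable `α = s_x = u_x + η_x` for the p-system. -/
def alphaP (K γ : ℝ) (u τ : ℝ → ℝ → ℝ) (x t : ℝ) : ℝ :=
  pdx u x t + pdx (etaP K γ τ) x t

/-- Gradient variable `β = r_x = u_x − η_x` for the p-system. -/
def betaP (K γ : ℝ) (u τ : ℝ → ℝ → ℝ) (x t : ℝ) : ℝ :=
  pdx u x t - pdx (etaP K γ τ) x t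

/-- The p-system `τ_t − u_x = 0`, `u_t + p_x = 0` with `p = K τ^{−γ}`, at the point `(x,t)`. -/
def pSystem (K γ : ℝ) (u τ : ℝ → ℝ → ℝ) (x t : ℝ) : Prop :=
  pdt τ x t - pdx u x t = 0 ∧
  pdt u x t + pdx (fun y s => K * τ y s ^ (-γ)) x t = 0

/-- Riemann invariant `s = u + η`. -/
def sRi (K γ : ℝ) (u τ : ℝ → ℝ → ℝ) (x t : ℝ) : ℝ := u x t + etaP K γ τ x t

/-- Riemann invariant `r = u − η`. -/
def rRi (K γ : ℝ) (u τ : ℝ → ℝ → ℝ) (x t : ℝ) : ℝ := u x t - etaP K γ τ x t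

/-- The Lagrangian wave speed `c = √(Kγ) τ^{−(γ+1)/2}`. -/
def cP (K γ : ℝ) (τ : ℝ → ℝ → ℝ) (x t : ℝ) : ℝ :=
  Real.sqrt (K * γ) * τ x t ^ (-(γ + 1) / 2)

/-- The constant `K_τ = (2√(Kγ)/(γ−1))^{2/(γ−1)}`. -/
def KtauC (K γ : ℝ) : ℝ := (2 * Real.sqrt (K * γ) / (γ - 1)) ^ (2 / (γ - 1))

/-- The constant `K_c = √(Kγ) K_τ^{−(γ+1)/2}`. -/
def KcC (K γ : ℝ) : ℝ := Real.sqrt (K * γ) * KtauC K γ ^ (-(γ + 1) / 2)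

/-- `k₁ = ((γ+1)K_c/(2(γ−1))) η^{2/(γ−1)}`. -/
def k1P (K γ : ℝ) (τ : ℝ → ℝ → ℝ) (x t : ℝ) : ℝ :=
  (γ + 1) * KcC K γ / (2 * (γ - 1)) * etaP K γ τ x t ^ (2 / (γ - 1))
/-- `m = e^{S/(2c_v)}`. -/
def mF (cv : ℝ) (S : ℝ → ℝ → ℝ) (x t : ℝ) : ℝ := Real.exp (S x t / (2 * cv))

/-- The ideal polytropic pressure `p = K e^{S/c_v} τ^{−γ}`. -/
def pF (K cv γ : ℝ) (τ S : ℝ → ℝ → ℝ) (x t : ℝ) : ℝ :=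
  K * Real.exp (S x t / cv) * τ x t ^ (-γ)

/-- The full compressible Euler equations `τ_t − u_x = 0`, `u_t + p_x = 0`, `S_t = 0`
with `p = K e^{S/c_v} τ^{−γ}`, at the point `(x,t)`. -/
def fullEuler (K cv γ : ℝ) (u τ S : ℝ → ℝ → ℝ) (x t : ℝ) : Prop :=
  pdt τ x t - pdx u x t = 0 ∧
  pdt u x t + pdx (pF K cv γ τ S) x t = 0 ∧
  pdt S x t = 0

/-- Wave speed `c = K_c m η^{(γ+1)/(γ−1)}` for the full Euler equations. -/
def cF (K cv γ : ℝ) (τ S : ℝ → ℝ → ℝ) (x t : ℝ) : ℝ :=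
  KcC K γ * mF cv S x t * etaP K γ τ x t ^ ((γ + 1) / (γ - 1))

/-- Gradient variable `α = u_x + m η_x + ((γ−1)/γ) m_x η` for the full Euler equations. -/
def alphaF (K cv γ : ℝ) (u τ S : ℝ → ℝ → ℝ) (x t : ℝ) : ℝ :=
  pdx u x t + mF cv S x t * pdx (etaP K γ τ) x t
    + (γ - 1) / γ * pdx (mF cv S) x t * etaP K γ τ x t

/-- Gradient variable `β = u_x − m η_x − ((γ−1)/γ) m_x η` for the full Euler equations. -/
def betaF (K cv γ : ℝ) (u τ S : ℝ → ℝ → ℝ) (x t : ℝ) : ℝ :=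
  pdx u x t - mF cv S x t * pdx (etaP K γ τ) x t
    - (γ - 1) / γ * pdx (mF cv S) x t * etaP K γ τ x t

/-- `k₂ = ((γ−1)/(γ(γ+1))) η m_x`. -/
def k2F (K cv γ : ℝ) (τ S : ℝ → ℝ → ℝ) (x t : ℝ) : ℝ :=
  (γ - 1) / (γ * (γ + 1)) * etaP K γ τ x t * pdx (mF cv S) x t

/-- Weighted gradient variable `α_ε = η^{2ε/(γ−1)} α`. -/
def aeps (K cv γ ε : ℝ) (u τ S : ℝ → ℝ → ℝ) (x t : ℝ) : ℝ :=
  etaP K γ τ x t ^ (2 * ε / (γ - 1)) * alphaF K cv γ u τ S x t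

/-- Weighted gradient variable `β_ε = η^{2ε/(γ−1)} β`. -/
def beps (K cv γ ε : ℝ) (u τ S : ℝ → ℝ → ℝ) (x t : ℝ) : ℝ :=
  etaP K γ τ x t ^ (2 * ε / (γ - 1)) * betaF K cv γ u τ S x t

/-- `k_{1ε} = ((γ+1)K_c/(2(γ−1))) η^{(2/(γ−1))(1−ε)}`. -/
def k1e (K γ ε : ℝ) (τ : ℝ → ℝ → ℝ) (x t : ℝ) : ℝ :=
  (γ + 1) * KcC K γ / (2 * (γ - 1)) * etaP K γ τ x t ^ (2 / (γ - 1) * (1 - ε))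

/-- `k_{2ε} = ((γ−1)/(γ(γ+1))) η^{1+2ε/(γ−1)} m_x`. -/
def k2e (K cv γ ε : ℝ) (τ S : ℝ → ℝ → ℝ) (x t : ℝ) : ℝ :=
  (γ - 1) / (γ * (γ + 1)) * etaP K γ τ x t ^ (1 + 2 * ε / (γ - 1)) * pdx (mF cv S) x t

/-!
In the variables `(u, η, m)` the equations read `η_t = -c₀ u_x`, `u_t = -c A`, `m_t = 0`, where
`c₀ = K_c η^{(γ+1)/(γ-1)}` is the isentropic wave speed `cP`, `c = m c₀`, and
`A = pGradF = m η_x + ((γ-1)/γ) m_x η` satisfies `p_x = c A`, `α = u_x + A`, `β = u_x - A`.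
Exchanging `∂_t` and `∂_x` (Clairaut), all second derivatives cancel from `α_t + c α_x`, which
becomes a quadratic in `α, β` whose coefficients are read off from `c₀ = 2(γ-1) k₁ η / (γ+1)`
and `c₀_x = 2 k₁ η_x`. For the weight `η^q`, `q = 2ε/(γ-1)`, the product rule adds
`q η^{q-1} α (η_t + c η_x)`, and `η_t + c η_x = -c₀ (β + (γ+1) k₂)`; since `q c₀ / η = 4ε k₁/(γ+1)`
this term produces exactly the `ε`-corrections.
-/

open Function Filter Topology

section PartialDerivatives

variable {f g : ℝ → ℝ → ℝ} {Ω : Set (ℝ × ℝ)} {x t : ℝ}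

theorem tendsto_horizontal : Tendsto (fun y : ℝ => (y, t)) (𝓝 x) (𝓝 (x, t)) :=
  (continuous_id.prodMk continuous_const).tendsto x

theorem tendsto_vertical : Tendsto (fun s : ℝ => (x, s)) (𝓝 t) (𝓝 (x, t)) :=
  (continuous_const.prodMk continuous_id).tendsto t

theorem hasDerivAt_pdx (hf : DifferentiableAt ℝ (uncurry f) (x, t)) :
    HasDerivAt (fun y => f y t) (pdx f x t) x :=
  (hf.comp (f := fun y : ℝ => (y, t)) x
    (differentiableAt_id.prodMk (differentiableAt_const t))).hasDerivAt

theorem hasDerivAt_pdt (hf : DifferentiableAt ℝ (uncurry f) (x, t)) :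
    HasDerivAt (fun s => f x s) (pdt f x t) t :=
  (hf.comp (f := fun s : ℝ => (x, s)) t
    ((differentiableAt_const x).prodMk differentiableAt_id)).hasDerivAt

theorem pdx_eq_fderiv (hf : DifferentiableAt ℝ (uncurry f) (x, t)) :
    pdx f x t = fderiv ℝ (uncurry f) (x, t) (1, 0) :=
  (hf.hasFDerivAt.comp_hasDerivAt (f := fun y : ℝ => (y, t)) x
    ((hasDerivAt_id x).prodMk (hasDerivAt_const x t))).deriv

theorem pdt_eq_fderiv (hf : DifferentiableAt ℝ (uncurry f) (x, t)) :
    pdt f x t = fderiv ℝ (uncurry f) (x, t) (0, 1) :=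
  (hf.hasFDerivAt.comp_hasDerivAt (f := fun s : ℝ => (x, s)) t
    ((hasDerivAt_const t x).prodMk (hasDerivAt_id t))).deriv

theorem pdx_congr (h : uncurry f =ᶠ[𝓝 (x, t)] uncurry g) : pdx f x t = pdx g x t :=
  EventuallyEq.deriv_eq (tendsto_horizontal.eventually h)

theorem pdt_congr (h : uncurry f =ᶠ[𝓝 (x, t)] uncurry g) : pdt f x t = pdt g x t :=
  EventuallyEq.deriv_eq (tendsto_vertical.eventually h)

theorem contDiffOn_pdx {n : WithTop ℕ∞} (hΩ : IsOpen Ω)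
    (hf : ContDiffOn ℝ (n + 1) (uncurry f) Ω) : ContDiffOn ℝ n (uncurry (pdx f)) Ω :=
  ((hf.fderiv_of_isOpen hΩ le_rfl).clm_apply (contDiffOn_const (c := ((1 : ℝ), (0 : ℝ))))).congr
    fun _ hp => pdx_eq_fderiv ((hf.differentiableOn (by simp)).differentiableAt (hΩ.mem_nhds hp))

theorem pdt_add_mul_pdx_rpow_mul {e a : ℝ → ℝ → ℝ} (c q : ℝ) (he : 0 < e x t)
    (hed : DifferentiableAt ℝ (uncurry e) (x, t)) (had : DifferentiableAt ℝ (uncurry a) (x, t)) :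
    pdt (fun y s => e y s ^ q * a y s) x t + c * pdx (fun y s => e y s ^ q * a y s) x t =
      e x t ^ q * (pdt a x t + c * pdx a x t)
        + q * e x t ^ (q - 1) * a x t * (pdt e x t + c * pdx e x t) := by
  have ht : pdt (fun y s => e y s ^ q * a y s) x t = _ :=
    (((hasDerivAt_pdt hed).rpow_const (p := q) (Or.inl he.ne')).mul (hasDerivAt_pdt had)).deriv
  have hx : pdx (fun y s => e y s ^ q * a y s) x t = _ :=
    (((hasDerivAt_pdx hed).rpow_const (p := q) (Or.inl he.ne')).mul (hasDerivAt_pdx had)).deriv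
  rw [ht, hx]
  ring

theorem pdt_pdx_eq_pdx_pdt (hΩ : IsOpen Ω) (hf : ContDiffOn ℝ 2 (uncurry f) Ω)
    (hp : (x, t) ∈ Ω) : pdt (pdx f) x t = pdx (pdt f) x t := by
  set F := uncurry f
  have hF : ContDiffAt ℝ 2 F (x, t) := hf.contDiffAt (hΩ.mem_nhds hp)
  have hD : DifferentiableAt ℝ (fderiv ℝ F) (x, t) :=
    (hF.fderiv_right (m := 1) (by norm_num)).differentiableAt one_ne_zero
  have hDv (v : ℝ × ℝ) : DifferentiableAt ℝ (fun z => fderiv ℝ F z v) (x, t) :=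
    hD.clm_apply (differentiableAt_const v)
  have hD2 (v w : ℝ × ℝ) :
      fderiv ℝ (fun z => fderiv ℝ F z v) (x, t) w = fderiv ℝ (fderiv ℝ F) (x, t) w v := by
    rw [fderiv_clm_apply hD (differentiableAt_const v)]
    simp
  have hdiff : ∀ᶠ z in 𝓝 (x, t), DifferentiableAt ℝ F z := by
    filter_upwards [hΩ.mem_nhds hp] with z hz
    exact (hf.differentiableOn (by simp)).differentiableAt (hΩ.mem_nhds hz)
  calc pdt (pdx f) x t = pdt (fun y s => fderiv ℝ F (y, s) (1, 0)) x t :=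
        pdt_congr (hdiff.mono fun _ hz => pdx_eq_fderiv hz)
    _ = fderiv ℝ (fderiv ℝ F) (x, t) (0, 1) (1, 0) := by rw [pdt_eq_fderiv (hDv _), ← hD2]; rfl
    _ = fderiv ℝ (fderiv ℝ F) (x, t) (1, 0) (0, 1) := hF.isSymmSndFDerivAt (by simp) _ _
    _ = pdx (fun y s => fderiv ℝ F (y, s) (0, 1)) x t := by rw [pdx_eq_fderiv (hDv _), ← hD2]; rfl
    _ = pdx (pdt f) x t := (pdx_congr (f := pdt f) (g := fun y s => fderiv ℝ F (y, s) (0, 1))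
          (hdiff.mono fun _ hz => pdt_eq_fderiv hz)).symm

theorem hasDerivAt_pdx_t_of_pdt_eqOn (hΩ : IsOpen Ω) (hf : ContDiffOn ℝ 2 (uncurry f) Ω)
    (hp : (x, t) ∈ Ω) (hfg : ∀ p ∈ Ω, pdt f p.1 p.2 = g p.1 p.2) {g' : ℝ}
    (hg : HasDerivAt (fun y => g y t) g' x) : HasDerivAt (fun s => pdx f x s) g' t := by
  have hfx : DifferentiableAt ℝ (uncurry (pdx f)) (x, t) :=
    ((contDiffOn_pdx (n := 1) hΩ hf).differentiableOn one_ne_zero).differentiableAt (hΩ.mem_nhds hp)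
  have hpdx : pdx (pdt f) x t = g' :=
    (pdx_congr (f := pdt f) (eventually_of_mem (hΩ.mem_nhds hp) hfg)).trans hg.deriv
  simpa only [pdt_pdx_eq_pdx_pdt hΩ hf hp, hpdx] using hasDerivAt_pdt hfx

end PartialDerivatives

section PolytropicGas

variable {K cv γ : ℝ} {τ S : ℝ → ℝ → ℝ} {x t : ℝ}

def pGradF (K cv γ : ℝ) (τ S : ℝ → ℝ → ℝ) (x t : ℝ) : ℝ :=
  mF cv S x t * pdx (etaP K γ τ) x t + (γ - 1) / γ * pdx (mF cv S) x t * etaP K γ τ x t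

theorem alphaF_eq_add (u : ℝ → ℝ → ℝ) :
    alphaF K cv γ u τ S x t = pdx u x t + pGradF K cv γ τ S x t :=
  add_assoc _ _ _

theorem betaF_eq_sub (u : ℝ → ℝ → ℝ) :
    betaF K cv γ u τ S x t = pdx u x t - pGradF K cv γ τ S x t :=
  sub_sub _ _ _

theorem etaCoeff_pos (hK : 0 < K) (hγ : 1 < γ) : 0 < 2 * √(K * γ) / (γ - 1) := by
  have : 0 < K * γ := mul_pos hK (by linarith)
  have : 0 < γ - 1 := by linarith
  positivity

theorem etaP_pos (hK : 0 < K) (hγ : 1 < γ) (hτ : 0 < τ x t) : 0 < etaP K γ τ x t :=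
  mul_pos (etaCoeff_pos hK hγ) (rpow_pos_of_pos hτ _)

theorem cP_eq_KcC_mul_etaP_rpow (hK : 0 < K) (hγ : 1 < γ) (hτ : 0 < τ x t) :
    cP K γ τ x t = KcC K γ * etaP K γ τ x t ^ ((γ + 1) / (γ - 1)) := by
  have ha := etaCoeff_pos hK hγ
  have hKτ : 0 < KtauC K γ := rpow_pos_of_pos ha _
  have hγ1 : γ - 1 ≠ 0 := by linarith
  have hcoeff : (2 * √(K * γ) / (γ - 1)) ^ ((γ + 1) / (γ - 1)) = KtauC K γ ^ ((γ + 1) / 2) := by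
    rw [KtauC, ← rpow_mul ha.le]
    field_simp
  rw [etaP, mul_rpow ha.le (rpow_nonneg hτ.le _), ← rpow_mul hτ.le, hcoeff, KcC, cP,
    show -(γ - 1) / 2 * ((γ + 1) / (γ - 1)) = -(γ + 1) / 2 by field_simp, mul_assoc,
    ← mul_assoc (KtauC K γ ^ _), ← rpow_add hKτ, neg_div, neg_add_cancel, rpow_zero, one_mul]

theorem cP_eq_k1P_mul_etaP (hK : 0 < K) (hγ : 1 < γ) (hτ : 0 < τ x t) :
    cP K γ τ x t = 2 * (γ - 1) / (γ + 1) * k1P K γ τ x t * etaP K γ τ x t := by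
  have hγ1 : γ - 1 ≠ 0 := by linarith
  have hγ1' : γ + 1 ≠ 0 := by linarith
  rw [cP_eq_KcC_mul_etaP_rpow hK hγ hτ, k1P, show (γ + 1) / (γ - 1) = 2 / (γ - 1) + 1 by
    field_simp; ring, rpow_add (etaP_pos hK hγ hτ), rpow_one]
  field_simp

theorem cF_eq_mF_mul_cP (hK : 0 < K) (hγ : 1 < γ) (hτ : 0 < τ x t) :
    cF K cv γ τ S x t = mF cv S x t * cP K γ τ x t := by
  rw [cF, cP_eq_KcC_mul_etaP_rpow hK hγ hτ]
  ring

theorem cP_mul_cP (hK : 0 < K) (hγ : 1 < γ) (hτ : 0 < τ x t) :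
    cP K γ τ x t * cP K γ τ x t = K * γ * τ x t ^ (-γ - 1) := by
  rw [cP, mul_mul_mul_comm, ← rpow_add hτ, Real.mul_self_sqrt (mul_pos hK (by linarith)).le]
  ring_nf

theorem cP_mul_etaP (hK : 0 < K) (hγ : 1 < γ) (hτ : 0 < τ x t) :
    cP K γ τ x t * etaP K γ τ x t = 2 * K * γ / (γ - 1) * τ x t ^ (-γ) := by
  rw [cP, etaP, mul_mul_mul_comm, ← rpow_add hτ, ← mul_div_assoc, mul_left_comm,
    Real.mul_self_sqrt (mul_pos hK (by linarith)).le]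
  ring_nf

theorem mF_mul_mF : mF cv S x t * mF cv S x t = exp (S x t / cv) := by
  rw [mF, ← exp_add]
  ring_nf

theorem HasDerivAt.etaCoeff_mul_rpow {g : ℝ → ℝ} {g' y : ℝ} (hγ : γ ≠ 1)
    (hg : HasDerivAt g g' y) (hpos : 0 < g y) :
    HasDerivAt (fun z => 2 * √(K * γ) / (γ - 1) * g z ^ (-(γ - 1) / 2))
      (-(√(K * γ) * g y ^ (-(γ + 1) / 2)) * g') y := by
  refine ((hg.rpow_const (p := -(γ - 1) / 2) (Or.inl hpos.ne')).const_mul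
    (2 * √(K * γ) / (γ - 1))).congr_deriv ?_
  rw [show -(γ - 1) / 2 - 1 = -(γ + 1) / 2 by ring]
  field_simp [sub_ne_zero.2 hγ]

theorem pdx_etaP (hγ : γ ≠ 1) (hτ : DifferentiableAt ℝ (uncurry τ) (x, t)) (hpos : 0 < τ x t) :
    pdx (etaP K γ τ) x t = -cP K γ τ x t * pdx τ x t :=
  ((hasDerivAt_pdx hτ).etaCoeff_mul_rpow hγ hpos).deriv

theorem pdt_etaP (hγ : γ ≠ 1) (hτ : DifferentiableAt ℝ (uncurry τ) (x, t)) (hpos : 0 < τ x t) :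
    pdt (etaP K γ τ) x t = -cP K γ τ x t * pdt τ x t :=
  ((hasDerivAt_pdt hτ).etaCoeff_mul_rpow hγ hpos).deriv

theorem pdx_mF (hS : DifferentiableAt ℝ (uncurry S) (x, t)) :
    pdx (mF cv S) x t = mF cv S x t * (pdx S x t / (2 * cv)) :=
  ((hasDerivAt_pdx hS).div_const _).exp.deriv

theorem pdt_mF (hS : DifferentiableAt ℝ (uncurry S) (x, t)) :
    pdt (mF cv S) x t = mF cv S x t * (pdt S x t / (2 * cv)) :=
  ((hasDerivAt_pdt hS).div_const _).exp.deriv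

theorem pdx_pF (hK : 0 < K) (hγ : 1 < γ) (hτ : DifferentiableAt ℝ (uncurry τ) (x, t))
    (hS : DifferentiableAt ℝ (uncurry S) (x, t)) (hpos : 0 < τ x t) :
    pdx (pF K cv γ τ S) x t = cF K cv γ τ S x t * pGradF K cv γ τ S x t := by
  have hp : HasDerivAt (fun y => pF K cv γ τ S y t)
      (K * (exp (S x t / cv) * (pdx S x t / cv)) * τ x t ^ (-γ)
        + K * exp (S x t / cv) * (pdx τ x t * (-γ) * τ x t ^ (-γ - 1))) x :=
    (((hasDerivAt_pdx hS).div_const cv).exp.const_mul K).mul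
      ((hasDerivAt_pdx hτ).rpow_const (Or.inl hpos.ne'))
  have hpx : pdx (pF K cv γ τ S) x t = _ := hp.deriv
  have hcη : (γ - 1) / γ * (cP K γ τ x t * etaP K γ τ x t) = 2 * K * τ x t ^ (-γ) := by
    rw [cP_mul_etaP hK hγ hpos]
    field_simp [show γ - 1 ≠ 0 by linarith, show γ ≠ 0 by linarith]
  rw [hpx, pGradF, pdx_etaP hγ.ne' hτ hpos, pdx_mF hS, cF_eq_mF_mul_cP hK hγ hpos]
  linear_combination (mF cv S x t * mF cv S x t * pdx τ x t) * cP_mul_cP hK hγ hpos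
    - (mF cv S x t * mF cv S x t * pdx S x t / (2 * cv)) * hcη
    - (K * pdx S x t / cv * τ x t ^ (-γ) - K * γ * pdx τ x t * τ x t ^ (-γ - 1)) * mF_mul_mF

end PolytropicGas

section Weights

variable {K cv γ ε : ℝ} {τ S : ℝ → ℝ → ℝ} {x t : ℝ}

theorem k1e_eq_k1P_div (hη : 0 < etaP K γ τ x t) :
    k1e K γ ε τ x t = k1P K γ τ x t / etaP K γ τ x t ^ (2 * ε / (γ - 1)) := by
  rw [k1e, k1P, show 2 / (γ - 1) * (1 - ε) = 2 / (γ - 1) - 2 * ε / (γ - 1) by ring,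
    rpow_sub hη]
  ring

theorem k2e_eq_k2F_mul (hη : 0 < etaP K γ τ x t) :
    k2e K cv γ ε τ S x t = k2F K cv γ τ S x t * etaP K γ τ x t ^ (2 * ε / (γ - 1)) := by
  rw [k2e, k2F, rpow_add hη, rpow_one]
  ring

end Weights

structure IsC2FullEulerSolution (K cv γ : ℝ) (Ω : Set (ℝ × ℝ)) (u τ S : ℝ → ℝ → ℝ) : Prop where
  isOpen : IsOpen Ω
  contDiffOn_u : ContDiffOn ℝ 2 (uncurry u) Ω
  contDiffOn_τ : ContDiffOn ℝ 2 (uncurry τ) Ω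
  contDiffOn_S : ContDiffOn ℝ 2 (uncurry S) Ω
  τ_pos : ∀ p ∈ Ω, 0 < τ p.1 p.2
  eqns : ∀ p ∈ Ω, fullEuler K cv γ u τ S p.1 p.2

namespace IsC2FullEulerSolution

variable {K cv γ : ℝ} {Ω : Set (ℝ × ℝ)} {u τ S : ℝ → ℝ → ℝ} {x t : ℝ}

theorem differentiableAt {F : ℝ × ℝ → ℝ} {n : WithTop ℕ∞} {p : ℝ × ℝ}
    (sol : IsC2FullEulerSolution K cv γ Ω u τ S) (hF : ContDiffOn ℝ n F Ω) (hn : n ≠ 0)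
    (hp : p ∈ Ω) : DifferentiableAt ℝ F p :=
  (hF.contDiffAt (sol.isOpen.mem_nhds hp)).differentiableAt hn

theorem contDiffOn_etaP (sol : IsC2FullEulerSolution K cv γ Ω u τ S) :
    ContDiffOn ℝ 2 (uncurry (etaP K γ τ)) Ω := fun p hp =>
  (contDiffAt_const.mul ((sol.contDiffOn_τ.contDiffAt (sol.isOpen.mem_nhds hp)).rpow_const_of_ne
    (sol.τ_pos p hp).ne')).contDiffWithinAt

theorem contDiffOn_mF (sol : IsC2FullEulerSolution K cv γ Ω u τ S) :
    ContDiffOn ℝ 2 (uncurry (mF cv S)) Ω :=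
  (sol.contDiffOn_S.div_const _).exp

theorem contDiffOn_pGradF (sol : IsC2FullEulerSolution K cv γ Ω u τ S) :
    ContDiffOn ℝ 1 (uncurry (pGradF K cv γ τ S)) Ω :=
  ((sol.contDiffOn_mF.of_le one_le_two).mul (contDiffOn_pdx sol.isOpen sol.contDiffOn_etaP)).add
    ((contDiffOn_const.mul (contDiffOn_pdx sol.isOpen sol.contDiffOn_mF)).mul
      (sol.contDiffOn_etaP.of_le one_le_two))

theorem pdt_etaP_eq (sol : IsC2FullEulerSolution K cv γ Ω u τ S) (hγ : γ ≠ 1) {p : ℝ × ℝ}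
    (hp : p ∈ Ω) : pdt (etaP K γ τ) p.1 p.2 = -cP K γ τ p.1 p.2 * pdx u p.1 p.2 := by
  rw [pdt_etaP hγ (sol.differentiableAt sol.contDiffOn_τ two_ne_zero hp) (sol.τ_pos p hp),
    sub_eq_zero.1 (sol.eqns p hp).1]

theorem pdt_u_eq (sol : IsC2FullEulerSolution K cv γ Ω u τ S) (hK : 0 < K) (hγ : 1 < γ)
    {p : ℝ × ℝ} (hp : p ∈ Ω) :
    pdt u p.1 p.2 = -(cF K cv γ τ S p.1 p.2 * pGradF K cv γ τ S p.1 p.2) := by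
  rw [← pdx_pF hK hγ (sol.differentiableAt sol.contDiffOn_τ two_ne_zero hp)
    (sol.differentiableAt sol.contDiffOn_S two_ne_zero hp) (sol.τ_pos p hp)]
  exact eq_neg_of_add_eq_zero_left (sol.eqns p hp).2.1

theorem pdt_mF_eq (sol : IsC2FullEulerSolution K cv γ Ω u τ S) {p : ℝ × ℝ} (hp : p ∈ Ω) :
    pdt (mF cv S) p.1 p.2 = 0 := by
  rw [pdt_mF (sol.differentiableAt sol.contDiffOn_S two_ne_zero hp), (sol.eqns p hp).2.2]
  simp

theorem hasDerivAt_cP_x (sol : IsC2FullEulerSolution K cv γ Ω u τ S) (hK : 0 < K) (hγ : 1 < γ)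
    (hp : (x, t) ∈ Ω) :
    HasDerivAt (fun y => cP K γ τ y t) (2 * k1P K γ τ x t * pdx (etaP K γ τ) x t) x := by
  have hη := etaP_pos hK hγ (sol.τ_pos _ hp)
  refine ((((hasDerivAt_pdx (sol.differentiableAt sol.contDiffOn_etaP two_ne_zero hp)).rpow_const
    (p := (γ + 1) / (γ - 1)) (Or.inl hη.ne')).const_mul (KcC K γ)).congr_of_eventuallyEq
    ((tendsto_horizontal.eventually (sol.isOpen.mem_nhds hp)).mono fun _ hy =>
      cP_eq_KcC_mul_etaP_rpow hK hγ (sol.τ_pos _ hy))).congr_deriv ?_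
  have hγ1 : γ - 1 ≠ 0 := by linarith
  rw [k1P, show (γ + 1) / (γ - 1) - 1 = 2 / (γ - 1) by field_simp; ring]
  field_simp

theorem hasDerivAt_cF_x (sol : IsC2FullEulerSolution K cv γ Ω u τ S) (hK : 0 < K) (hγ : 1 < γ)
    (hp : (x, t) ∈ Ω) :
    HasDerivAt (fun y => cF K cv γ τ S y t) (pdx (mF cv S) x t * cP K γ τ x t
      + mF cv S x t * (2 * k1P K γ τ x t * pdx (etaP K γ τ) x t)) x :=
  ((hasDerivAt_pdx (sol.differentiableAt sol.contDiffOn_mF two_ne_zero hp)).mul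
    (sol.hasDerivAt_cP_x hK hγ hp)).congr_of_eventuallyEq
    ((tendsto_horizontal.eventually (sol.isOpen.mem_nhds hp)).mono fun _ hy =>
      cF_eq_mF_mul_cP hK hγ (sol.τ_pos _ hy))

theorem hasDerivAt_pdx_u_t (sol : IsC2FullEulerSolution K cv γ Ω u τ S) (hK : 0 < K)
    (hγ : 1 < γ) (hp : (x, t) ∈ Ω) :
    HasDerivAt (fun s => pdx u x s) (-((pdx (mF cv S) x t * cP K γ τ x t
      + mF cv S x t * (2 * k1P K γ τ x t * pdx (etaP K γ τ) x t)) * pGradF K cv γ τ S x t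
      + cF K cv γ τ S x t * pdx (pGradF K cv γ τ S) x t)) t :=
  hasDerivAt_pdx_t_of_pdt_eqOn sol.isOpen sol.contDiffOn_u hp
    (g := fun y s => -(cF K cv γ τ S y s * pGradF K cv γ τ S y s))
    (fun _ hq => sol.pdt_u_eq hK hγ hq) ((sol.hasDerivAt_cF_x hK hγ hp).mul
      (hasDerivAt_pdx (sol.differentiableAt sol.contDiffOn_pGradF one_ne_zero hp))).neg

theorem hasDerivAt_pGradF_t (sol : IsC2FullEulerSolution K cv γ Ω u τ S) (hK : 0 < K)
    (hγ : 1 < γ) (hp : (x, t) ∈ Ω) :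
    HasDerivAt (fun s => pGradF K cv γ τ S x s)
      (-(mF cv S x t * (2 * k1P K γ τ x t * pdx (etaP K γ τ) x t * pdx u x t
          + cP K γ τ x t * pdx (pdx u) x t)
        + (γ - 1) / γ * pdx (mF cv S) x t * (cP K γ τ x t * pdx u x t))) t := by
  have hm : HasDerivAt (fun s => mF cv S x s) 0 t := by
    simpa only [sol.pdt_mF_eq hp] using
      hasDerivAt_pdt (sol.differentiableAt sol.contDiffOn_mF two_ne_zero hp)
  have hmx : HasDerivAt (fun s => pdx (mF cv S) x s) 0 t :=
    hasDerivAt_pdx_t_of_pdt_eqOn sol.isOpen sol.contDiffOn_mF hp (g := fun _ _ => 0)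
      (fun _ hq => sol.pdt_mF_eq hq) (hasDerivAt_const _ _)
  have hη : HasDerivAt (fun s => etaP K γ τ x s) (-cP K γ τ x t * pdx u x t) t := by
    simpa only [sol.pdt_etaP_eq hγ.ne' hp] using
      hasDerivAt_pdt (sol.differentiableAt sol.contDiffOn_etaP two_ne_zero hp)
  have hηx : HasDerivAt (fun s => pdx (etaP K γ τ) x s)
      (-(2 * k1P K γ τ x t * pdx (etaP K γ τ) x t * pdx u x t
        + cP K γ τ x t * pdx (pdx u) x t)) t :=
    hasDerivAt_pdx_t_of_pdt_eqOn sol.isOpen sol.contDiffOn_etaP hp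
      (g := fun y s => -cP K γ τ y s * pdx u y s) (fun _ hq => sol.pdt_etaP_eq hγ.ne' hq)
      (((sol.hasDerivAt_cP_x hK hγ hp).neg.mul (hasDerivAt_pdx (sol.differentiableAt
        (contDiffOn_pdx sol.isOpen sol.contDiffOn_u) one_ne_zero hp))).congr_deriv
        (by rw [Pi.neg_apply]; ring))
  exact ((hm.mul hηx).add ((hmx.const_mul _).mul hη)).congr_deriv (by ring)

theorem riccati_equations (sol : IsC2FullEulerSolution K cv γ Ω u τ S) (hK : 0 < K) (hγ : 1 < γ)
    (hp : (x, t) ∈ Ω) :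
    pdt (alphaF K cv γ u τ S) x t + cF K cv γ τ S x t * pdx (alphaF K cv γ u τ S) x t =
        k1P K γ τ x t *
          (k2F K cv γ τ S x t * (3 * alphaF K cv γ u τ S x t + betaF K cv γ u τ S x t)
            + alphaF K cv γ u τ S x t * betaF K cv γ u τ S x t - alphaF K cv γ u τ S x t ^ 2) ∧
      pdt (betaF K cv γ u τ S) x t - cF K cv γ τ S x t * pdx (betaF K cv γ u τ S) x t =
        k1P K γ τ x t *
          (-k2F K cv γ τ S x t * (alphaF K cv γ u τ S x t + 3 * betaF K cv γ u τ S x t)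
            + alphaF K cv γ u τ S x t * betaF K cv γ u τ S x t - betaF K cv γ u τ S x t ^ 2) := by
  have hux_x := hasDerivAt_pdx
    (sol.differentiableAt (contDiffOn_pdx sol.isOpen sol.contDiffOn_u) one_ne_zero hp)
  have hA_x := hasDerivAt_pdx (sol.differentiableAt sol.contDiffOn_pGradF one_ne_zero hp)
  have hux_t := sol.hasDerivAt_pdx_u_t hK hγ hp
  have hA_t := sol.hasDerivAt_pGradF_t hK hγ hp
  have hτ := sol.τ_pos _ hp
  have hαt : pdt (alphaF K cv γ u τ S) x t = _ :=
    ((hux_t.add hA_t).congr_of_eventuallyEq (.of_forall fun _ => alphaF_eq_add u)).deriv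
  have hαx : pdx (alphaF K cv γ u τ S) x t = _ :=
    ((hux_x.add hA_x).congr_of_eventuallyEq (.of_forall fun _ => alphaF_eq_add u)).deriv
  have hβt : pdt (betaF K cv γ u τ S) x t = _ :=
    ((hux_t.sub hA_t).congr_of_eventuallyEq (.of_forall fun _ => betaF_eq_sub u)).deriv
  have hβx : pdx (betaF K cv γ u τ S) x t = _ :=
    ((hux_x.sub hA_x).congr_of_eventuallyEq (.of_forall fun _ => betaF_eq_sub u)).deriv
  rw [hαt, hαx, hβt, hβx]
  simp only [alphaF_eq_add, betaF_eq_sub, k2F, cF_eq_mF_mul_cP hK hγ hτ,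
    cP_eq_k1P_mul_etaP hK hγ hτ, pGradF]
  have : γ - 1 ≠ 0 := by linarith
  have : γ + 1 ≠ 0 := by linarith
  have : γ ≠ 0 := by linarith
  constructor
  · field_simp
    ring
  · field_simp
    ring

theorem contDiffOn_alphaF (sol : IsC2FullEulerSolution K cv γ Ω u τ S) :
    ContDiffOn ℝ 1 (uncurry (alphaF K cv γ u τ S)) Ω :=
  ((contDiffOn_pdx sol.isOpen sol.contDiffOn_u).add sol.contDiffOn_pGradF).congr
    fun _ _ => alphaF_eq_add u

theorem contDiffOn_betaF (sol : IsC2FullEulerSolution K cv γ Ω u τ S) :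
    ContDiffOn ℝ 1 (uncurry (betaF K cv γ u τ S)) Ω :=
  ((contDiffOn_pdx sol.isOpen sol.contDiffOn_u).sub sol.contDiffOn_pGradF).congr
    fun _ _ => betaF_eq_sub u

theorem transport_etaP (sol : IsC2FullEulerSolution K cv γ Ω u τ S) (hK : 0 < K) (hγ : 1 < γ)
    (hp : (x, t) ∈ Ω) :
    pdt (etaP K γ τ) x t + cF K cv γ τ S x t * pdx (etaP K γ τ) x t =
        -cP K γ τ x t * (betaF K cv γ u τ S x t + (γ + 1) * k2F K cv γ τ S x t) ∧
      pdt (etaP K γ τ) x t - cF K cv γ τ S x t * pdx (etaP K γ τ) x t =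
        -cP K γ τ x t * (alphaF K cv γ u τ S x t - (γ + 1) * k2F K cv γ τ S x t) := by
  rw [sol.pdt_etaP_eq hγ.ne' hp, cF_eq_mF_mul_cP hK hγ (sol.τ_pos _ hp), alphaF, betaF, k2F]
  have : γ + 1 ≠ 0 := by linarith
  constructor <;> field_simp <;> ring

end IsC2FullEulerSolution

theorem fullEuler_weighted_riccati_equations_general
    (K cv γ ε : ℝ) (hK : 0 < K) (hγ : 1 < γ)
    (Ω : Set (ℝ × ℝ)) (hΩ : IsOpen Ω)
    (u τ S : ℝ → ℝ → ℝ)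
    (hu_reg : ContDiffOn ℝ 2 (fun p : ℝ × ℝ => u p.1 p.2) Ω)
    (hτ_reg : ContDiffOn ℝ 2 (fun p : ℝ × ℝ => τ p.1 p.2) Ω)
    (hS_reg : ContDiffOn ℝ 2 (fun p : ℝ × ℝ => S p.1 p.2) Ω)
    (hτ_pos : ∀ p ∈ Ω, 0 < τ p.1 p.2)
    (hpde : ∀ p ∈ Ω, fullEuler K cv γ u τ S p.1 p.2) :
    ∀ p ∈ Ω,
      pdt (aeps K cv γ ε u τ S) p.1 p.2 +
          cF K cv γ τ S p.1 p.2 * pdx (aeps K cv γ ε u τ S) p.1 p.2 =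
        k1e K γ ε τ p.1 p.2 *
          (k2e K cv γ ε τ S p.1 p.2 *
              (3 * aeps K cv γ ε u τ S p.1 p.2 - 4 * ε * aeps K cv γ ε u τ S p.1 p.2 +
                beps K cv γ ε u τ S p.1 p.2) +
            (1 - 4 * ε / (γ + 1)) * aeps K cv γ ε u τ S p.1 p.2 * beps K cv γ ε u τ S p.1 p.2 -
            (aeps K cv γ ε u τ S p.1 p.2) ^ 2) ∧
      pdt (beps K cv γ ε u τ S) p.1 p.2 -
          cF K cv γ τ S p.1 p.2 * pdx (beps K cv γ ε u τ S) p.1 p.2 =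
        k1e K γ ε τ p.1 p.2 *
          (-(k2e K cv γ ε τ S p.1 p.2) *
              (aeps K cv γ ε u τ S p.1 p.2 + 3 * beps K cv γ ε u τ S p.1 p.2 -
                4 * ε * beps K cv γ ε u τ S p.1 p.2) +
            (1 - 4 * ε / (γ + 1)) * aeps K cv γ ε u τ S p.1 p.2 * beps K cv γ ε u τ S p.1 p.2 -
            (beps K cv γ ε u τ S p.1 p.2) ^ 2) := by
  have sol : IsC2FullEulerSolution K cv γ Ω u τ S := ⟨hΩ, hu_reg, hτ_reg, hS_reg, hτ_pos, hpde⟩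
  rintro ⟨x, t⟩ hp
  dsimp only
  have hτ : 0 < τ x t := hτ_pos _ hp
  have hη := etaP_pos hK hγ hτ
  have hηd := sol.differentiableAt sol.contDiffOn_etaP two_ne_zero hp
  have hWα := pdt_add_mul_pdx_rpow_mul (cF K cv γ τ S x t) (2 * ε / (γ - 1)) hη hηd
    (sol.differentiableAt sol.contDiffOn_alphaF one_ne_zero hp)
  have hWβ := pdt_add_mul_pdx_rpow_mul (-cF K cv γ τ S x t) (2 * ε / (γ - 1)) hη hηd
    (sol.differentiableAt sol.contDiffOn_betaF one_ne_zero hp)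
  simp only [neg_mul, ← sub_eq_add_neg] at hWβ
  obtain ⟨hα, hβ⟩ := sol.riccati_equations hK hγ hp
  obtain ⟨hηα, hηβ⟩ := sol.transport_etaP hK hγ hp
  unfold aeps beps
  rw [hWα, hWβ, hα, hβ, hηα, hηβ, k1e_eq_k1P_div hη, k2e_eq_k2F_mul hη, rpow_sub_one hη.ne',
    cP_eq_k1P_mul_etaP hK hγ hτ]
  have : γ - 1 ≠ 0 := by linarith
  have : γ + 1 ≠ 0 := by linarith
  constructor <;> field_simp <;> ring

/-- Riccati equations for the weighted gradient variables `α_ε`, `β_ε`. -/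
theorem fullEuler_weighted_riccati_equations
    (K cv γ ε : ℝ) (hK : 0 < K) (hcv : 0 < cv) (hγ : 1 < γ)
    (hε0 : 0 < ε) (hε : ε < 1 / 4)
    (Ω : Set (ℝ × ℝ)) (hΩ : IsOpen Ω)
    (u τ S : ℝ → ℝ → ℝ)
    (hu_reg : ContDiffOn ℝ 2 (fun p : ℝ × ℝ => u p.1 p.2) Ω)
    (hτ_reg : ContDiffOn ℝ 2 (fun p : ℝ × ℝ => τ p.1 p.2) Ω)
    (hS_reg : ContDiffOn ℝ 2 (fun p : ℝ × ℝ => S p.1 p.2) Ω)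
    (hτ_pos : ∀ p ∈ Ω, 0 < τ p.1 p.2)
    (hpde : ∀ p ∈ Ω, fullEuler K cv γ u τ S p.1 p.2) :
    ∀ p ∈ Ω,
      pdt (aeps K cv γ ε u τ S) p.1 p.2 +
          cF K cv γ τ S p.1 p.2 * pdx (aeps K cv γ ε u τ S) p.1 p.2 =
        k1e K γ ε τ p.1 p.2 *
          (k2e K cv γ ε τ S p.1 p.2 *
              (3 * aeps K cv γ ε u τ S p.1 p.2 - 4 * ε * aeps K cv γ ε u τ S p.1 p.2 +
                beps K cv γ ε u τ S p.1 p.2) +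
            (1 - 4 * ε / (γ + 1)) * aeps K cv γ ε u τ S p.1 p.2 * beps K cv γ ε u τ S p.1 p.2 -
            (aeps K cv γ ε u τ S p.1 p.2) ^ 2) ∧
      pdt (beps K cv γ ε u τ S) p.1 p.2 -
          cF K cv γ τ S p.1 p.2 * pdx (beps K cv γ ε u τ S) p.1 p.2 =
        k1e K γ ε τ p.1 p.2 *
          (-(k2e K cv γ ε τ S p.1 p.2) *
              (aeps K cv γ ε u τ S p.1 p.2 + 3 * beps K cv γ ε u τ S p.1 p.2 -
                4 * ε * beps K cv γ ε u τ S p.1 p.2) +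
            (1 - 4 * ε / (γ + 1)) * aeps K cv γ ε u τ S p.1 p.2 * beps K cv γ ε u τ S p.1 p.2 -
            (beps K cv γ ε u τ S p.1 p.2) ^ 2) :=
  fullEuler_weighted_riccati_equations_general K cv γ ε hK hγ Ω hΩ u τ S hu_reg hτ_reg hS_reg hτ_pos
    hpde
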